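/- arXiv:1811.00411 — 2 statements merged into one kernel-verified Lean document; each statement's English description precedes it below -/
import Mathlib

section
/- For any two scalar functions f, g ∈ L²_loc and standard mollifier φ^l, the following commutator identity holds pointwise for x in the domain where the mollifications are defined: (fg)^l(x) = f^l(x) g^l(x) + ∫_{|y|≤l} φ^l(y) (f(x−y) − f(x)) (g(x−y) − g(x)) dy − (f(x) − f^l(x)) (g(x) − g^l(x)). -/
open MeasureTheory Metric Set Filter ENNReal
open scoped Topology RealInnerProductSpace

noncomputable section

abbrev E3 : Type := EuclideanSpace ℝ (Fin 3)

/-- distance to the boundary of `Ω` -/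
def dB (Ω : Set E3) (x : E3) : ℝ := Metric.infDist x (frontier Ω)

/-- the boundary layer `Ω_ε = {x ∈ Ω : d(x) < ε}` -/
def layer (Ω : Set E3) (ε : ℝ) : Set E3 := {x ∈ Ω | dB Ω x < ε}

/-- the interior region `Ω^ε = {x ∈ Ω : d(x) > ε}` -/
def intr (Ω : Set E3) (ε : ℝ) : Set E3 := {x ∈ Ω | ε < dB Ω x}

/-- the scaled mollifier kernel  `φ^l(y) = l⁻³ φ(y/l)` -/
def mollK (φ : E3 → ℝ) (l : ℝ) (y : E3) : ℝ := l⁻¹ ^ 3 * φ (l⁻¹ • y)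

/-- mollification of a vector field: `f^l(x) = ∫_{|y|≤l} φ^l(y) f(x-y) dy` -/
def moll (φ : E3 → ℝ) (l : ℝ) (f : E3 → E3) (x : E3) : E3 :=
  ∫ y in Metric.closedBall (0 : E3) l, mollK φ l y • f (x - y)

/-- translation-based Besov seminorm `sup_{y} ‖f(·)-f(·-y)‖_{L³(S ∩ (S+y))}/|y|^α` -/
def besovSemi (α : ℝ) (S : Set E3) (f : E3 → E3) : ℝ≥0∞ :=
  ⨆ y : E3, eLpNorm (fun x => f x - f (x - y)) 3 (volume.restrict (S ∩ {x | x - y ∈ S}))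
      / ENNReal.ofReal (‖y‖ ^ α)

/-- Besov norm `‖f‖_{L³(S)} + [f]_{B^α_{3,∞}(S)}` -/
def besovNorm (α : ℝ) (S : Set E3) (f : E3 → E3) : ℝ≥0∞ :=
  eLpNorm f 3 (volume.restrict S) + besovSemi α S f

theorem integral_mul_sub_mul_sub_of_integral_eq_one {α : Type*} [MeasurableSpace α]
    {μ : Measure α} {K u v : α → ℝ} (c d : ℝ) (hK : ∫ y, K y ∂μ = 1)
    (hu : Integrable (fun y => K y * u y) μ) (hv : Integrable (fun y => K y * v y) μ)
    (huv : Integrable (fun y => K y * (u y * v y)) μ) :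
    ∫ y, K y * ((u y - c) * (v y - d)) ∂μ
      = ∫ y, K y * (u y * v y) ∂μ - c * ∫ y, K y * v y ∂μ - d * ∫ y, K y * u y ∂μ
        + c * d := by
  have hK_int : Integrable K μ := .of_integral_ne_zero (hK ▸ one_ne_zero)
  have h_expand : (fun y => K y * ((u y - c) * (v y - d)))
      = fun y => K y * (u y * v y) - c * (K y * v y) - d * (K y * u y) + c * d * K y := by
    funext y; ring
  rw [h_expand, integral_add _ (hK_int.const_mul _), integral_sub _ (hu.const_mul d),
    integral_sub huv (hv.const_mul c), integral_const_mul, integral_const_mul,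
    integral_const_mul, hK, mul_one]
  · exact huv.sub (hv.const_mul c)
  · exact (huv.sub (hv.const_mul c)).sub (hu.const_mul d)

theorem stmt1_general (φ : E3 → ℝ) (l : ℝ)
    (hunit : (∫ y in Metric.closedBall (0 : E3) l, mollK φ l y) = 1)
    (f g : E3 → ℝ) (x : E3)
    (hf : IntegrableOn (fun y => mollK φ l y * f (x - y)) (Metric.closedBall (0 : E3) l))
    (hg : IntegrableOn (fun y => mollK φ l y * g (x - y)) (Metric.closedBall (0 : E3) l))
    (hfg : IntegrableOn (fun y => mollK φ l y * (f (x - y) * g (x - y)))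
      (Metric.closedBall (0 : E3) l)) :
    (∫ y in Metric.closedBall (0 : E3) l, mollK φ l y * (f (x - y) * g (x - y)))
      = (∫ y in Metric.closedBall (0 : E3) l, mollK φ l y * f (x - y))
          * (∫ y in Metric.closedBall (0 : E3) l, mollK φ l y * g (x - y))
        + (∫ y in Metric.closedBall (0 : E3) l,
            mollK φ l y * ((f (x - y) - f x) * (g (x - y) - g x)))
        - (f x - ∫ y in Metric.closedBall (0 : E3) l, mollK φ l y * f (x - y))
          * (g x - ∫ y in Metric.closedBall (0 : E3) l, mollK φ l y * g (x - y)) := by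
  rw [integral_mul_sub_mul_sub_of_integral_eq_one (f x) (g x) hunit hf hg hfg]
  ring

/-- Constantin–E–Titi commutator identity for products:
`(fg)^l(x) = f^l(x) g^l(x) + ∫ φ^l(y)(f(x−y)−f(x))(g(x−y)−g(x)) dy − (f(x)−f^l(x))(g(x)−g^l(x))`. -/
theorem stmt1 (φ : E3 → ℝ) (l : ℝ) (hl : 0 < l)
    (hφnonneg : ∀ x, 0 ≤ φ x) (hφsupp : Function.support φ ⊆ Metric.closedBall 0 1)
    (hunit : (∫ y in Metric.closedBall (0 : E3) l, mollK φ l y) = 1)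
    (f g : E3 → ℝ) (x : E3)
    (hf : IntegrableOn (fun y => mollK φ l y * f (x - y)) (Metric.closedBall (0 : E3) l))
    (hg : IntegrableOn (fun y => mollK φ l y * g (x - y)) (Metric.closedBall (0 : E3) l))
    (hfg : IntegrableOn (fun y => mollK φ l y * (f (x - y) * g (x - y)))
      (Metric.closedBall (0 : E3) l)) :
    (∫ y in Metric.closedBall (0 : E3) l, mollK φ l y * (f (x - y) * g (x - y)))
      = (∫ y in Metric.closedBall (0 : E3) l, mollK φ l y * f (x - y))
          * (∫ y in Metric.closedBall (0 : E3) l, mollK φ l y * g (x - y))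
        + (∫ y in Metric.closedBall (0 : E3) l,
            mollK φ l y * ((f (x - y) - f x) * (g (x - y) - g x)))
        - (f x - ∫ y in Metric.closedBall (0 : E3) l, mollK φ l y * f (x - y))
          * (g x - ∫ y in Metric.closedBall (0 : E3) l, mollK φ l y * g (x - y)) :=
  stmt1_general φ l hunit f g x hf hg hfg
end
end

section
/- Let Ω ⊂ ℝ³ be a bounded C² domain and suppose w : Ω → ℝ³ satisfies sup_{x ∈ Ω_h} |w(x)·n(m(x))| ≤ ε(h) with ε(h) → 0 as h → 0 (wall-normal continuity), and w ∈ L^∞(Ω_{h₀}). Then ‖w^l · ∇θ_{h,l}‖_{L³(Ω_h\Ω_{h−l})} ≤ C l^{−1} ( l^{1/3} ε(2h) + l^{1/3} osc_l(w) ), where osc_l(w) := sup_{|y| ≤ l} ‖w(·−y) − w(·)‖_{L^∞(Ω_{2h})}; in particular, under assumption (iii)' of the paper, l·‖w^l·∇θ_{h,l}‖_{L³} is controlled by the wall-normal modulus of continuity. -/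
open MeasureTheory Metric Set Filter ENNReal
open scoped Topology RealInnerProductSpace

noncomputable section

lemma mollK_nonneg (φ : E3 → ℝ) (hφ : ∀ x, 0 ≤ φ x) {l : ℝ} (hl : 0 < l) (y : E3) :
    0 ≤ mollK φ l y := mul_nonneg (by positivity) (hφ _)

lemma mollK_cont (φ : E3 → ℝ) (hφ : Continuous φ) (l : ℝ) : Continuous (mollK φ l) := by
  unfold mollK; fun_prop

lemma mollK_int1 {φ : E3 → ℝ} (hφc : Continuous φ)
    (hφsupp : Function.support φ ⊆ Metric.closedBall 0 1) (hφint : ∫ x, φ x = 1)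
    {l : ℝ} (hl : 0 < l) : ∫ y in Metric.closedBall (0:E3) l, mollK φ l y = 1 := by
  rw [setIntegral_eq_integral_of_forall_compl_eq_zero (f := mollK φ l)]
  · have h1 : ∫ y, mollK φ l y = l⁻¹ ^ 3 * ∫ y, φ (l⁻¹ • y) := by
      unfold mollK; rw [integral_const_mul]
    rw [h1, MeasureTheory.Measure.integral_comp_inv_smul_of_nonneg volume φ hl.le]
    simp only [finrank_euclideanSpace_fin, hφint, smul_eq_mul, mul_one]
    field_simp
  · intro y hy
    have h1 : φ (l⁻¹ • y) = 0 := by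
      by_contra hc
      have hmem := hφsupp (Function.mem_support.2 hc)
      simp only [Metric.mem_closedBall, dist_zero_right] at hmem hy
      rw [norm_smul, norm_inv, Real.norm_eq_abs, abs_of_pos hl] at hmem
      push_neg at hy
      have h2 := mul_le_mul_of_nonneg_left hmem hl.le
      rw [mul_one, ← mul_assoc, mul_inv_cancel₀ hl.ne', one_mul] at h2
      linarith
    simp [mollK, h1]

lemma moll_inner_bound {φ : E3 → ℝ} (hφc : Continuous φ) (hφnn : ∀ x, 0 ≤ φ x)
    (hφsupp : Function.support φ ⊆ Metric.closedBall 0 1) (hφint : ∫ x, φ x = 1)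
    {l : ℝ} (hl : 0 < l) (w : E3 → E3) (nv : E3) (hnv : ‖nv‖ = 1) (x : E3)
    {A B : ℝ} (hA : |⟪w x, nv⟫| ≤ A) (hB : ∀ y : E3, ‖y‖ ≤ l → ‖w (x - y) - w x‖ ≤ B)
    (hA0 : 0 ≤ A) (hB0 : 0 ≤ B) :
    |⟪moll φ l w x, nv⟫| ≤ A + B := by
  rw [real_inner_comm]
  by_cases hInt : Integrable (fun y => mollK φ l y • w (x - y))
      (volume.restrict (Metric.closedBall (0:E3) l))
  · have hK1 := mollK_int1 hφc hφsupp hφint hl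
    have hIntK : IntegrableOn (mollK φ l) (Metric.closedBall (0:E3) l) volume :=
      (mollK_cont φ hφc l).continuousOn.integrableOn_compact (isCompact_closedBall _ _)
    have hInt2 : Integrable (fun y => mollK φ l y * ⟪nv, w x⟫)
        (volume.restrict (Metric.closedBall (0:E3) l)) := hIntK.mul_const _
    have hInt1 : Integrable (fun y => mollK φ l y * ⟪nv, w (x - y)⟫)
        (volume.restrict (Metric.closedBall (0:E3) l)) := by
      have h := (innerSL ℝ nv).integrable_comp hInt
      have e : (fun y => (innerSL ℝ nv) (mollK φ l y • w (x - y)))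
          = fun y => mollK φ l y * ⟪nv, w (x - y)⟫ := by
        funext y; simp [real_inner_smul_right]
      rwa [e] at h
    have hsub : Integrable (fun y => mollK φ l y * (⟪nv, w (x - y)⟫ - ⟪nv, w x⟫))
        (volume.restrict (Metric.closedBall (0:E3) l)) := by
      simpa only [mul_sub, Pi.sub_def] using hInt1.sub hInt2
    have key : ⟪nv, moll φ l w x⟫
        = ∫ y in Metric.closedBall (0:E3) l, mollK φ l y * ⟪nv, w (x - y)⟫ := by
      unfold moll
      rw [← integral_inner hInt nv]
      simp_rw [real_inner_smul_right]
    have split : (∫ y in Metric.closedBall (0:E3) l, mollK φ l y * ⟪nv, w (x - y)⟫)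
        = (∫ y in Metric.closedBall (0:E3) l,
            mollK φ l y * (⟪nv, w (x - y)⟫ - ⟪nv, w x⟫)) + ⟪nv, w x⟫ := by
      have e1 : (fun y => mollK φ l y * ⟪nv, w (x - y)⟫)
          = fun y => mollK φ l y * (⟪nv, w (x - y)⟫ - ⟪nv, w x⟫)
              + mollK φ l y * ⟪nv, w x⟫ := by funext y; ring
      rw [e1, integral_add hsub hInt2, integral_mul_const, hK1, one_mul]
    have hfirst : |∫ y in Metric.closedBall (0:E3) l,
        mollK φ l y * (⟪nv, w (x - y)⟫ - ⟪nv, w x⟫)| ≤ B := by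
      calc |∫ y in Metric.closedBall (0:E3) l, mollK φ l y * (⟪nv, w (x - y)⟫ - ⟪nv, w x⟫)|
          ≤ ∫ y in Metric.closedBall (0:E3) l,
              |mollK φ l y * (⟪nv, w (x - y)⟫ - ⟪nv, w x⟫)| := by
            have h := norm_integral_le_integral_norm
              (fun y => mollK φ l y * (⟪nv, w (x - y)⟫ - ⟪nv, w x⟫))
                (μ := volume.restrict (Metric.closedBall (0:E3) l))
            simp only [Real.norm_eq_abs] at h
            exact h
        _ ≤ ∫ y in Metric.closedBall (0:E3) l, mollK φ l y * B := by
            refine setIntegral_mono_on hsub.abs (hIntK.mul_const _)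
              measurableSet_closedBall ?_
            intro y hy
            rw [abs_mul, abs_of_nonneg (mollK_nonneg φ hφnn hl y)]
            refine mul_le_mul_of_nonneg_left ?_ (mollK_nonneg φ hφnn hl y)
            rw [← inner_sub_right]
            calc |⟪nv, w (x - y) - w x⟫| ≤ ‖nv‖ * ‖w (x - y) - w x‖ :=
                abs_real_inner_le_norm _ _
              _ ≤ B := by
                rw [hnv, one_mul]
                exact hB y (mem_closedBall_zero_iff.1 hy)
        _ = B := by rw [integral_mul_const, hK1, one_mul]
    rw [key, split]
    have hA' : |⟪nv, w x⟫| ≤ A := by rwa [real_inner_comm]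
    calc |(∫ y in Metric.closedBall (0:E3) l,
            mollK φ l y * (⟪nv, w (x - y)⟫ - ⟪nv, w x⟫)) + ⟪nv, w x⟫|
        ≤ |∫ y in Metric.closedBall (0:E3) l,
            mollK φ l y * (⟪nv, w (x - y)⟫ - ⟪nv, w x⟫)| + |⟪nv, w x⟫| := abs_add_le _ _
      _ ≤ B + A := add_le_add hfirst hA'
      _ = A + B := by ring
  · have h0 : moll φ l w x = 0 := integral_undef hInt
    rw [h0]
    simp only [inner_zero_right, abs_zero]
    linarith

/-- under the wall-normal continuity `sup_{Ω_{h'}} |w·n(m(·))| ≤ ε(h')` and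
boundedness of `w` near the boundary,
`‖w^l·∇θ_{h,l}‖_{L³(Ω_h\Ω_{h−l})} ≤ C l⁻¹ ( l^{1/3} ε(2h) + l^{1/3} osc_l(w) )`,
where `osc_l(w) = sup_{|y|≤l} ‖w(·−y)−w(·)‖_{L^∞(Ω_{2h})}`. -/
theorem stmt19 (Ω : Set E3) (hΩo : IsOpen Ω) (hΩb : Bornology.IsBounded Ω)
    (h₀ : ℝ) (hh₀ : 0 < h₀) (m n : E3 → E3) (hn : ∀ x, ‖n (m x)‖ = 1)
    (φ : E3 → ℝ) (hφsmooth : ContDiff ℝ (⊤ : ℕ∞) φ) (hφnonneg : ∀ x, 0 ≤ φ x)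
    (hφsupp : Function.support φ ⊆ Metric.closedBall 0 1) (hφint : ∫ x, φ x = 1)
    (C₀ C₁ : ℝ) (hC₀ : 0 < C₀) (hC₁ : 0 < C₁) :
    ∃ C > 0, ∀ h l : ℝ, 0 < l → l ≤ h / 16 → h < h₀ →
      ∀ η : ℝ → ℝ, (∀ z, |deriv η z| ≤ C₀ / l) →
        (∀ z, z < h - l ∨ h < z → deriv η z = 0) →
        volume (layer Ω h \ layer Ω (h - l)) ≤ ENNReal.ofReal (C₁ * l) →
        ∀ w : E3 → E3, ∀ ε : ℝ → ℝ, ∀ Osc Mw : ℝ,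
          (∀ h' : ℝ, 0 < h' → ∀ x ∈ layer Ω h', |⟪w x, n (m x)⟫| ≤ ε h') →
          (∀ y : E3, ‖y‖ ≤ l → ∀ x ∈ layer Ω (2 * h), ‖w (x - y) - w x‖ ≤ Osc) →
          (∀ x ∈ layer Ω h₀, ‖w x‖ ≤ Mw) →
          eLpNorm (fun x => ⟪moll φ l w x, -(deriv η (dB Ω x) • n (m x))⟫) 3
              (volume.restrict (layer Ω h \ layer Ω (h - l)))
            ≤ ENNReal.ofReal
                (C * l⁻¹ * (l ^ ((1 : ℝ) / 3) * ε (2 * h) + l ^ ((1 : ℝ) / 3) * Osc)) := by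
  refine ⟨C₀ * C₁ ^ ((1:ℝ)/3), by positivity, ?_⟩
  intro h l hl hlh hh η hη hη0 hvol w ε Osc Mw hwn hosc hbd
  have hh0 : 0 < h := by nlinarith
  set S := layer Ω h \ layer Ω (h - l) with hSdef
  by_cases hS0 : volume S = 0
  · rw [Measure.restrict_eq_zero.2 hS0, eLpNorm_measure_zero]
    exact zero_le
  have hne : S.Nonempty := by
    rw [Set.nonempty_iff_ne_empty]
    intro he
    exact hS0 (he ▸ measure_empty)
  obtain ⟨x₀, hx₀⟩ := hne
  have hsub2h : ∀ x ∈ S, x ∈ layer Ω (2 * h) := by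
    intro x hx
    exact ⟨hx.1.1, lt_of_lt_of_le hx.1.2 (by linarith)⟩
  have hε0 : 0 ≤ ε (2 * h) :=
    (abs_nonneg _).trans (hwn (2 * h) (by linarith) x₀ (hsub2h x₀ hx₀))
  have hOsc0 : 0 ≤ Osc := by
    have h1 := hosc 0 (by simp [hl.le]) x₀ (hsub2h x₀ hx₀)
    exact le_trans (norm_nonneg _) h1
  have hmeasL : ∀ t : ℝ, MeasurableSet (layer Ω t) := by
    intro t
    have e : layer Ω t = Ω ∩ (dB Ω) ⁻¹' (Set.Iio t) := rfl
    rw [e]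
    exact hΩo.measurableSet.inter
      ((Metric.continuous_infDist_pt (frontier Ω)).measurable measurableSet_Iio)
  have hmeasS : MeasurableSet S := (hmeasL h).diff (hmeasL (h - l))
  have hpt : ∀ x ∈ S, ‖⟪moll φ l w x, -(deriv η (dB Ω x) • n (m x))⟫‖
      ≤ (C₀ / l) * (ε (2 * h) + Osc) := by
    intro x hx
    have hx2 := hsub2h x hx
    have hball := moll_inner_bound hφsmooth.continuous hφnonneg hφsupp hφint hl w
      (n (m x)) (hn x) x (hwn (2 * h) (by linarith) x hx2)
      (fun y hy => hosc y hy x hx2) hε0 hOsc0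
    have e : ⟪moll φ l w x, -(deriv η (dB Ω x) • n (m x))⟫
        = -(deriv η (dB Ω x) * ⟪moll φ l w x, n (m x)⟫) := by
      rw [inner_neg_right, real_inner_smul_right]
    rw [Real.norm_eq_abs, e, abs_neg, abs_mul]
    exact mul_le_mul (hη _) hball (abs_nonneg _) (le_of_lt (div_pos hC₀ hl))
  have hae : ∀ᵐ x ∂(volume.restrict S),
      ‖⟪moll φ l w x, -(deriv η (dB Ω x) • n (m x))⟫‖ ≤ (C₀ / l) * (ε (2 * h) + Osc) :=
    (ae_restrict_mem hmeasS).mono hpt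
  have hle := eLpNorm_le_of_ae_bound (p := 3) hae
  rw [Measure.restrict_apply_univ] at hle
  have h3 : (3 : ℝ≥0∞).toReal⁻¹ = (3 : ℝ)⁻¹ := by norm_num
  calc eLpNorm (fun x => ⟪moll φ l w x, -(deriv η (dB Ω x) • n (m x))⟫) 3 (volume.restrict S)
      ≤ volume S ^ (3 : ℝ≥0∞).toReal⁻¹ * ENNReal.ofReal ((C₀ / l) * (ε (2 * h) + Osc)) := hle
    _ ≤ ENNReal.ofReal (C₁ * l) ^ (3 : ℝ≥0∞).toReal⁻¹
          * ENNReal.ofReal ((C₀ / l) * (ε (2 * h) + Osc)) := by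
        gcongr
    _ = ENNReal.ofReal ((C₁ * l) ^ ((3:ℝ)⁻¹) * ((C₀ / l) * (ε (2 * h) + Osc))) := by
        rw [h3, ENNReal.ofReal_rpow_of_nonneg (by positivity) (by norm_num),
          ← ENNReal.ofReal_mul (by positivity)]
    _ ≤ ENNReal.ofReal (C₀ * C₁ ^ ((1:ℝ)/3) * l⁻¹
          * (l ^ ((1 : ℝ) / 3) * ε (2 * h) + l ^ ((1 : ℝ) / 3) * Osc)) := by
        apply ENNReal.ofReal_le_ofReal
        apply le_of_eq
        rw [Real.mul_rpow hC₁.le hl.le]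
        have e13 : ((3:ℝ)⁻¹) = (1:ℝ)/3 := by norm_num
        rw [e13, div_eq_mul_inv]
        ring
end
end
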